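/- arXiv:1410.8088 — 3 statements merged into one kernel-verified Lean document; each statement's English description precedes it below -/
import Mathlib

section
/- The map h : ℝ⁵ → ℝ⁵ defined by h(x,y,z,t,s) = (λ₁x + z - sgn(z)·|z|^(1/λ₁), y, sgn(z)·|z|^(1/λ₁), sgn(t)·|t|^(1/λ₂), s) is a bijection of ℝ² × (ℝ³ \ {0}) onto itself, for fixed real parameters λ₁, λ₂ ∉ {0,1} with λ₁ ≠ λ₂. -/
noncomputable def phi (c z : ℝ) : ℝ := Real.sign z * |z| ^ c

lemma phi_zero (c : ℝ) : phi c 0 = 0 := by simp [phi]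

lemma phi_eq_zero_iff (c z : ℝ) : phi c z = 0 ↔ z = 0 := by
  constructor
  · intro h
    by_contra hz
    have hp : (0:ℝ) < |z| ^ c := Real.rpow_pos_of_pos (abs_pos.mpr hz) c
    rcases lt_or_gt_of_ne hz with h1 | h1
    · rw [phi, Real.sign_of_neg h1] at h; nlinarith
    · rw [phi, Real.sign_of_pos h1] at h; nlinarith
  · rintro rfl; exact phi_zero c

lemma phi_comp (c c' z : ℝ) : phi c (phi c' z) = phi (c' * c) z := by
  rcases lt_trichotomy z 0 with h1 | rfl | h1
  · have hp : (0:ℝ) < |z| ^ c' := Real.rpow_pos_of_pos (abs_pos.mpr h1.ne) c'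
    have hw : phi c' z = -(|z| ^ c') := by rw [phi, Real.sign_of_neg h1]; ring
    have hneg : phi c' z < 0 := by rw [hw]; linarith
    rw [phi, Real.sign_of_neg hneg, hw, abs_neg, abs_of_pos hp,
      ← Real.rpow_mul (abs_nonneg z), phi, Real.sign_of_neg h1]
  · simp [phi_zero]
  · have hp : (0:ℝ) < |z| ^ c' := Real.rpow_pos_of_pos (abs_pos.mpr h1.ne') c'
    have hw : phi c' z = |z| ^ c' := by rw [phi, Real.sign_of_pos h1]; ring
    have hpos : 0 < phi c' z := by rw [hw]; linarith
    rw [phi, Real.sign_of_pos hpos, hw, abs_of_pos hp,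
      ← Real.rpow_mul (abs_nonneg z), phi, Real.sign_of_pos h1]

lemma phi_one (z : ℝ) : phi 1 z = z := by
  rcases lt_trichotomy z 0 with h1 | rfl | h1
  · rw [phi, Real.sign_of_neg h1, Real.rpow_one, abs_of_neg h1]; ring
  · simp [phi]
  · rw [phi, Real.sign_of_pos h1, Real.rpow_one, abs_of_pos h1]; ring

/-- The open set `V = ℝ² × (ℝ³ \ {0}) ⊆ ℝ⁵`, i.e. points whose last three
coordinates are not all zero. -/
def Vset : Set (ℝ × ℝ × ℝ × ℝ × ℝ) :=
  {p | (p.2.2.1, p.2.2.2.1, p.2.2.2.2) ≠ (0, 0, 0)}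

lemma mem_Vset_iff (p : ℝ × ℝ × ℝ × ℝ × ℝ) :
    p ∈ Vset ↔ ¬(p.2.2.1 = 0 ∧ p.2.2.2.1 = 0 ∧ p.2.2.2.2 = 0) := by
  simp [Vset, Prod.ext_iff]

/-- The map `h(x,y,z,t,s) = (λ₁x + z - sgn(z)|z|^{1/λ₁}, y, sgn(z)|z|^{1/λ₁},
sgn(t)|t|^{1/λ₂}, s)` is a bijection of `ℝ² × (ℝ³ \ {0})` onto itself, for
`λ₁, λ₂ ∉ {0,1}`, `λ₁ ≠ λ₂`. -/
theorem stmt0 (lam1 lam2 : ℝ) (h10 : lam1 ≠ 0) (h11 : lam1 ≠ 1)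
    (h20 : lam2 ≠ 0) (h21 : lam2 ≠ 1) (h12 : lam1 ≠ lam2) :
    Set.BijOn (fun p : ℝ × ℝ × ℝ × ℝ × ℝ =>
      (lam1 * p.1 + p.2.2.1 - Real.sign p.2.2.1 * |p.2.2.1| ^ (1 / lam1),
        p.2.1,
        Real.sign p.2.2.1 * |p.2.2.1| ^ (1 / lam1),
        Real.sign p.2.2.2.1 * |p.2.2.2.1| ^ (1 / lam2),
        p.2.2.2.2)) Vset Vset := by
  set f : ℝ × ℝ × ℝ × ℝ × ℝ → ℝ × ℝ × ℝ × ℝ × ℝ := fun p =>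
      (lam1 * p.1 + p.2.2.1 - Real.sign p.2.2.1 * |p.2.2.1| ^ (1 / lam1),
        p.2.1,
        Real.sign p.2.2.1 * |p.2.2.1| ^ (1 / lam1),
        Real.sign p.2.2.2.1 * |p.2.2.2.1| ^ (1 / lam2),
        p.2.2.2.2) with hf
  have hfeq : ∀ p : ℝ × ℝ × ℝ × ℝ × ℝ, f p =
      (lam1 * p.1 + p.2.2.1 - phi (1/lam1) p.2.2.1, p.2.1,
        phi (1/lam1) p.2.2.1, phi (1/lam2) p.2.2.2.1, p.2.2.2.2) := by
    intro p; rw [hf]; rfl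
  set g : ℝ × ℝ × ℝ × ℝ × ℝ → ℝ × ℝ × ℝ × ℝ × ℝ := fun q =>
      ((q.1 - phi lam1 q.2.2.1 + q.2.2.1) / lam1, q.2.1,
        phi lam1 q.2.2.1, phi lam2 q.2.2.2.1, q.2.2.2.2) with hg
  have h1 : (1/lam1) * lam1 = 1 := by field_simp
  have h1' : lam1 * (1/lam1) = 1 := by field_simp
  have h2 : (1/lam2) * lam2 = 1 := by field_simp
  have h2' : lam2 * (1/lam2) = 1 := by field_simp
  have hgf : ∀ p, g (f p) = p := by
    intro p
    rw [hfeq, hg]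
    simp only
    have hz : phi lam1 (phi (1/lam1) p.2.2.1) = p.2.2.1 := by
      rw [phi_comp, h1, phi_one]
    have ht : phi lam2 (phi (1/lam2) p.2.2.2.1) = p.2.2.2.1 := by
      rw [phi_comp, h2, phi_one]
    rw [hz, ht]
    have : (lam1 * p.1 + p.2.2.1 - phi (1/lam1) p.2.2.1 - p.2.2.1 +
        phi (1/lam1) p.2.2.1) / lam1 = p.1 := by field_simp; ring
    rw [this]
  have hfg : ∀ q, f (g q) = q := by
    intro q
    rw [hfeq, hg]
    simp only
    have hz : phi (1/lam1) (phi lam1 q.2.2.1) = q.2.2.1 := by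
      rw [phi_comp, h1', phi_one]
    have ht : phi (1/lam2) (phi lam2 q.2.2.2.1) = q.2.2.2.1 := by
      rw [phi_comp, h2', phi_one]
    rw [hz, ht]
    have : lam1 * ((q.1 - phi lam1 q.2.2.1 + q.2.2.1) / lam1) +
        phi lam1 q.2.2.1 - q.2.2.1 = q.1 := by field_simp; ring
    rw [this]
  have hmf : Set.MapsTo f Vset Vset := by
    intro p hp
    rw [mem_Vset_iff] at hp ⊢
    rw [hfeq]
    simp only [phi_eq_zero_iff]
    exact hp
  have hmg : Set.MapsTo g Vset Vset := by
    intro q hq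
    rw [mem_Vset_iff] at hq ⊢
    rw [hg]
    simp only [phi_eq_zero_iff]
    exact hq
  exact Set.InvOn.bijOn ⟨fun p _ => hgf p, fun q _ => hfg q⟩ hmf hmg
end

section
/- The map ρ : ℝ² × (ℝ² × ℂ × ℝ) → ℝ² × ℂ × ℝ defined by ρ((r,a), (x, y, w, s)) = (x - (sin a)·(Re w) - (1 - cos a)·(Im w), y + r, w·exp(-i·a), exp(a)·s) is a group action of the additive group ℝ² on ℝ² × ℂ × ℝ. -/
open Complex

/-- The action map
`ρ((r,a),(x,y,w,s)) = (x - sin a · Re w - (1 - cos a) · Im w, y + r, w·e^{-ia}, e^a · s)`. -/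
noncomputable def rho : (ℝ × ℝ) → (ℝ × ℝ × ℂ × ℝ) → (ℝ × ℝ × ℂ × ℝ) :=
  fun ra p =>
    (p.1 - Real.sin ra.2 * p.2.2.1.re - (1 - Real.cos ra.2) * p.2.2.1.im,
      p.2.1 + ra.1,
      p.2.2.1 * Complex.exp (-(ra.2 * Complex.I)),
      Real.exp ra.2 * p.2.2.2)

/-- `ρ` is an action of the additive group `ℝ²` on `ℝ² × ℂ × ℝ`:
`ρ(0,v) = v` and `ρ((r₁,a₁), ρ((r₂,a₂), v)) = ρ((r₁+r₂, a₁+a₂), v)`. -/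
theorem stmt4 :
    (∀ v : ℝ × ℝ × ℂ × ℝ, rho (0, 0) v = v) ∧
    (∀ (r₁ a₁ r₂ a₂ : ℝ) (v : ℝ × ℝ × ℂ × ℝ),
      rho (r₁, a₁) (rho (r₂, a₂) v) = rho (r₁ + r₂, a₁ + a₂) v) := by
  constructor
  · intro v
    simp [rho]
  · intro r₁ a₁ r₂ a₂ v
    have he : ∀ a : ℝ, Complex.exp (-(↑a * Complex.I)) =
        Complex.ofReal (Real.cos a) - Complex.ofReal (Real.sin a) * Complex.I := by
      intro a
      rw [show -(↑a * Complex.I) = ↑(-a) * Complex.I by push_cast; ring,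
        Complex.exp_mul_I, Complex.ofReal_cos, Complex.ofReal_sin]
      push_cast [Complex.cos_neg, Complex.sin_neg]
      ring
    simp only [rho, Prod.mk.injEq, he]
    refine ⟨?_, by ring, ?_, ?_⟩
    · simp only [Complex.sub_re, Complex.sub_im, Complex.mul_re, Complex.mul_im,
        Complex.ofReal_re, Complex.ofReal_im, Complex.I_re, Complex.I_im,
        Real.sin_add, Real.cos_add]
      ring
    · rw [show (a₁:ℝ) + a₂ = a₂ + a₁ from add_comm _ _]
      push_cast [Real.cos_add, Real.sin_add]
      ring_nf
      simp [Complex.I_sq]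
      ring
    · rw [Real.exp_add]; ring
end

section
/- For each fixed (α,β,γ,δ,σ) with (γ,δ,σ) ≠ 0, the subset Ω = {(α + (1-e^a)γ, y, e^a γ, e^a δ, e^a σ) : y, a ∈ ℝ} of ℝ⁵ is a 2-dimensional smooth (embedded) submanifold of ℝ⁵, being the image of the injective immersion (y,a) ↦ (α + (1-e^a)γ, y, e^a γ, e^a δ, e^a σ). -/
open Real ContinuousLinearMap

/-- For fixed `(α,β,γ,δ,σ)` with `(γ,δ,σ) ≠ 0`, the generic K-orbit
`Ω = {(α + (1-e^a)γ, y, e^a γ, e^a δ, e^a σ) : y, a ∈ ℝ}` of `G_{5,3,4}` is the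
image of the parametrization `F(y,a) = (α + (1-e^a)γ, y, e^a γ, e^a δ, e^a σ)`,
which is an injective smooth map whose differential has rank 2 everywhere;
hence `Ω` is a 2-dimensional smooth embedded submanifold of `ℝ⁵`. -/
theorem stmt16 (α β γ δ σ : ℝ) (h : (γ, δ, σ) ≠ (0, 0, 0)) :
    let F : ℝ × ℝ → ℝ × ℝ × ℝ × ℝ × ℝ := fun q =>
      (α + (1 - Real.exp q.2) * γ, q.1,
        Real.exp q.2 * γ, Real.exp q.2 * δ, Real.exp q.2 * σ)
    Set.range F =
      {p : ℝ × ℝ × ℝ × ℝ × ℝ | ∃ y a : ℝ,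
        p = (α + (1 - Real.exp a) * γ, y,
          Real.exp a * γ, Real.exp a * δ, Real.exp a * σ)} ∧
    Function.Injective F ∧
    ContDiff ℝ (⊤ : ℕ∞) F ∧
    ∀ q : ℝ × ℝ,
      LinearMap.rank ((fderiv ℝ F q) : (ℝ × ℝ) →ₗ[ℝ] (ℝ × ℝ × ℝ × ℝ × ℝ)) = 2 := by
  intro F
  have hne : γ ≠ 0 ∨ δ ≠ 0 ∨ σ ≠ 0 := by
    by_contra hc
    push_neg at hc
    exact h (by simp [hc.1, hc.2.1, hc.2.2])
  refine ⟨?_, ?_, ?_, ?_⟩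
  · ext p
    constructor
    · rintro ⟨⟨y, a⟩, rfl⟩; exact ⟨y, a, rfl⟩
    · rintro ⟨y, a, rfl⟩; exact ⟨⟨y, a⟩, rfl⟩
  · rintro ⟨y1, a1⟩ ⟨y2, a2⟩ hF
    simp only [F, Prod.mk.injEq] at hF
    obtain ⟨h1, h2, h3, h4, h5⟩ := hF
    have ha : a1 = a2 := by
      rcases hne with hg | hg | hg
      · exact Real.exp_injective (mul_right_cancel₀ hg h3)
      · exact Real.exp_injective (mul_right_cancel₀ hg h4)
      · exact Real.exp_injective (mul_right_cancel₀ hg h5)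
    exact Prod.ext h2 ha
  · fun_prop
  · intro q
    set e := Real.exp q.2 with he
    set snd2 : ℝ × ℝ →L[ℝ] ℝ := ContinuousLinearMap.snd ℝ ℝ ℝ
    set fst2 : ℝ × ℝ →L[ℝ] ℝ := ContinuousLinearMap.fst ℝ ℝ ℝ
    set D : ℝ × ℝ →L[ℝ] ℝ × ℝ × ℝ × ℝ × ℝ :=
      ((-(e * γ)) • snd2).prod (fst2.prod (((e * γ) • snd2).prod
        (((e * δ) • snd2).prod ((e * σ) • snd2))))
    have hsnd : HasFDerivAt (Prod.snd : ℝ × ℝ → ℝ) snd2 q := hasFDerivAt_snd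
    have hexp : HasFDerivAt (fun q : ℝ × ℝ => Real.exp q.2) (e • snd2) q := by
      have := (Real.hasDerivAt_exp q.2).comp_hasFDerivAt q hsnd
      exact this
    have hD : HasFDerivAt F D q := by
      have h1 : HasFDerivAt (fun q : ℝ × ℝ => α + (1 - Real.exp q.2) * γ)
          ((-(e * γ)) • snd2) q := by
        have := ((hasFDerivAt_const (1:ℝ) q).sub hexp).mul_const γ
        have := (hasFDerivAt_const α q).add this
        refine this.congr_fderiv ?_
        ext v <;> simp [snd2, smul_smul] <;> ring
      have h3 : ∀ c : ℝ, HasFDerivAt (fun q : ℝ × ℝ => Real.exp q.2 * c)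
          ((e * c) • snd2) q := by
        intro c
        have := hexp.mul_const c
        refine this.congr_fderiv ?_
        ext v <;> simp [snd2, smul_smul] <;> ring
      exact h1.prodMk ((hasFDerivAt_fst).prodMk ((h3 γ).prodMk ((h3 δ).prodMk (h3 σ))))
    rw [hD.fderiv]
    have hinj : Function.Injective (D : (ℝ × ℝ) →ₗ[ℝ] ℝ × ℝ × ℝ × ℝ × ℝ) := by
      intro v w hvw
      simp only [D, ContinuousLinearMap.coe_coe, ContinuousLinearMap.prod_apply,
        ContinuousLinearMap.smul_apply, ContinuousLinearMap.coe_snd',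
        ContinuousLinearMap.coe_fst', Prod.mk.injEq, smul_eq_mul] at hvw
      obtain ⟨h1, h2, h3, h4, h5⟩ := hvw
      have hepos : e ≠ 0 := (Real.exp_pos q.2).ne'
      have : v.2 = w.2 := by
        rcases hne with hg | hg | hg
        · exact mul_left_cancel₀ (mul_ne_zero hepos hg) h3
        · exact mul_left_cancel₀ (mul_ne_zero hepos hg) h4
        · exact mul_left_cancel₀ (mul_ne_zero hepos hg) h5
      exact Prod.ext h2 this
    exact (rank_range_of_injective _ hinj).trans (by simp; exact one_add_one_eq_two)
end
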